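/- Let K and F be closed subsets of a T₁ topological space X such that K ∩ F = K ∩ int(F), where int(F) denotes the interior of F. Then for every ordinal α, (K ∩ F)^(α) = K^(α) ∩ F. -/

import Mathlib

/-!
Being an accumulation point is a local property, so intersecting with `F` does not change
derived sets at points of `int F`. Since `K ∩ F ⊆ int F` and every derivative of `K` lies
in `K`, each derivation step commutes with `· ∩ F`; limit steps commute with `· ∩ F` trivially.
-/

open Ordinal Set Filter Topology

/-- The `α`-th Cantor–Bendixson derivative of a set `A`, defined by transfinite
recursion: `A^(0) = A`, `A^(β+1) = (A^(β))'` (derived set in the ambient space),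
and `A^(λ) = ⋂_{γ<λ} A^(γ)` at nonzero limit ordinals. -/
noncomputable def cbDeriv {X : Type*} [TopologicalSpace X] (A : Set X) (o : Ordinal) : Set X :=
  Ordinal.limitRecOn o A (fun _ ih => derivedSet ih)
    (fun o _ ih => ⋂ (β : Ordinal) (h : β < o), ih β h)

section

variable {X : Type*} [TopologicalSpace X]

lemma accPt_principal_inter_iff_of_mem_nhds {x : X} {A U : Set X} (hU : U ∈ 𝓝 x) :
    AccPt x (𝓟 (A ∩ U)) ↔ AccPt x (𝓟 A) := by
  have hle : 𝓝[≠] x ≤ 𝓟 U := le_principal_iff.2 (mem_nhdsWithin_of_mem_nhds hU)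
  rw [AccPt, AccPt, ← inf_principal, inf_comm (𝓟 A), ← inf_assoc, inf_eq_left.2 hle]

lemma derivedSet_inter_of_subset_interior {S F : Set X} (hS : IsClosed S) (hF : IsClosed F)
    (hSF : S ∩ F ⊆ interior F) : derivedSet (S ∩ F) = derivedSet S ∩ F := by
  refine subset_antisymm (subset_inter (derivedSet_mono _ _ inter_subset_left) ?_) ?_
  · exact (derivedSet_subset_closure _).trans ((hS.inter hF).closure_subset.trans inter_subset_right)
  · rintro x ⟨hxS', hxF⟩
    have hxS : x ∈ S := hS.closure_subset (derivedSet_subset_closure S hxS')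
    have hF_nhds : F ∈ 𝓝 x := mem_interior_iff_mem_nhds.1 (hSF ⟨hxS, hxF⟩)
    exact (accPt_principal_inter_iff_of_mem_nhds hF_nhds).2 hxS'

lemma cbDeriv_zero (A : Set X) : cbDeriv A 0 = A :=
  limitRecOn_zero ..

lemma cbDeriv_succ (A : Set X) (o : Ordinal) : cbDeriv A (o + 1) = derivedSet (cbDeriv A o) :=
  limitRecOn_add_one ..

lemma cbDeriv_limit (A : Set X) {o : Ordinal} (ho : Order.IsSuccLimit o) :
    cbDeriv A o = ⋂ β ∈ Iio o, cbDeriv A β :=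
  limitRecOn_limit _ _ _ _ ho

lemma cbDeriv_isClosed [T1Space X] {A : Set X} (hA : IsClosed A) (o : Ordinal) :
    IsClosed (cbDeriv A o) := by
  induction o using limitRecOn with
  | zero => rwa [cbDeriv_zero]
  | add_one o _ => rw [cbDeriv_succ]; exact isClosed_derivedSet _
  | limit o ho ih => rw [cbDeriv_limit _ ho]; exact isClosed_biInter ih

lemma cbDeriv_subset [T1Space X] {A : Set X} (hA : IsClosed A) (o : Ordinal) :
    cbDeriv A o ⊆ A := by
  induction o using limitRecOn with
  | zero => rw [cbDeriv_zero]
  | add_one o ih =>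
    rw [cbDeriv_succ]
    exact (derivedSet_subset_closure _).trans ((cbDeriv_isClosed hA o).closure_subset.trans ih)
  | limit o ho ih =>
    rw [cbDeriv_limit _ ho]
    exact (biInter_subset_of_mem (s := Iio o) (t := cbDeriv A) ho.pos).trans (ih 0 ho.pos)

end

theorem stmt1 {X : Type*} [TopologicalSpace X] [T1Space X] {K F : Set X}
    (hK : IsClosed K) (hF : IsClosed F) (h : K ∩ F = K ∩ interior F) (α : Ordinal) :
    cbDeriv (K ∩ F) α = cbDeriv K α ∩ F := by
  induction α using limitRecOn with
  | zero => rw [cbDeriv_zero, cbDeriv_zero]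
  | add_one o ih =>
    rw [cbDeriv_succ, cbDeriv_succ, ih]
    refine derivedSet_inter_of_subset_interior (cbDeriv_isClosed hK o) hF ?_
    calc cbDeriv K o ∩ F ⊆ K ∩ F := inter_subset_inter_left F (cbDeriv_subset hK o)
      _ = K ∩ interior F := h
      _ ⊆ interior F := inter_subset_right
  | limit o ho ih =>
    rw [cbDeriv_limit _ ho, cbDeriv_limit _ ho, ← biInter_inter ⟨0, ho.pos⟩]
    exact iInter₂_congr ih
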